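/- Let B be a strongly E-Birkhoff Galois structure on a Barr exact category C. If t : A → B and s : B → C are regular epimorphisms such that the composite s ∘ t : A → C is a covering, then both t and s are coverings. -/

import Mathlib

open CategoryTheory CategoryTheory.Limits

universe v u

namespace Paper

variable {C : Type u} [Category.{v} C]

/-- `f` is a regular epimorphism. -/
def IsRegEpi {X Y : C} (f : X ⟶ Y) : Prop := Nonempty (RegularEpi f)

/-- A regular category: a finitely complete category with coequalizers of kernel pairs in
which regular epimorphisms are stable under pullback. -/
class RegularCat (C : Type u) [Category.{v} C] [HasFiniteLimits C] : Prop where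
  hasCoeqOfKernelPairs : ∀ {X Y : C} (f : X ⟶ Y),
    HasCoequalizer (pullback.fst f f) (pullback.snd f f)
  regEpiPullbackStable : ∀ {X Y Z : C} (f : X ⟶ Y) (g : Z ⟶ Y),
    IsRegEpi f → IsRegEpi (pullback.snd f g)

/-- An internal equivalence relation given by a parallel pair `r₁ r₂ : R ⟶ X`. -/
structure IsEquivRel [HasFiniteLimits C] {R X : C} (r₁ r₂ : R ⟶ X) : Prop where
  jointlyMono : Mono (prod.lift r₁ r₂)
  refl : ∃ d : X ⟶ R, d ≫ r₁ = 𝟙 X ∧ d ≫ r₂ = 𝟙 X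
  symm : ∃ s : R ⟶ R, s ≫ r₁ = r₂ ∧ s ≫ r₂ = r₁
  trans : ∃ t : pullback r₂ r₁ ⟶ R,
    t ≫ r₁ = pullback.fst r₂ r₁ ≫ r₁ ∧ t ≫ r₂ = pullback.snd r₂ r₁ ≫ r₂

/-- A Barr exact category: a regular category in which every internal equivalence relation
is effective (i.e. is a kernel pair). -/
class BarrExact (C : Type u) [Category.{v} C] [HasFiniteLimits C] extends RegularCat C : Prop where
  equivRelEffective : ∀ {R X : C} (r₁ r₂ : R ⟶ X), IsEquivRel r₁ r₂ →
    ∃ (Y : C) (f : X ⟶ Y), IsKernelPair f r₁ r₂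

section DoubleExt
variable [HasFiniteLimits C]

/-- A double extension: a commutative square `αt ≫ fB = fA ≫ αb` of regular epimorphisms
whose comparison morphism to the pullback is also a regular epimorphism. -/
structure IsDoubleExt {A₁ A₀ B₁ B₀ : C} (fA : A₁ ⟶ A₀) (fB : B₁ ⟶ B₀)
    (αt : A₁ ⟶ B₁) (αb : A₀ ⟶ B₀) : Prop where
  w : αt ≫ fB = fA ≫ αb
  left : IsRegEpi fA
  right : IsRegEpi fB
  top : IsRegEpi αt
  bot : IsRegEpi αb
  comparison : IsRegEpi (pullback.lift fA αt w.symm : A₁ ⟶ pullback αb fB)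

end DoubleExt

/-- The category `Ext C` of extensions: the full subcategory of the arrow category of `C`
determined by the regular epimorphisms. -/
abbrev ExtCat (C : Type u) [Category.{v} C] : Type max u v :=
  ObjectProperty.FullSubcategory (fun f : Arrow C => IsRegEpi f.hom)

/-- An object of `Ext C` from a regular epimorphism. -/
def ExtCat.mk' {X Y : C} (f : X ⟶ Y) (hf : IsRegEpi f) : ExtCat C :=
  ⟨Arrow.mk f, hf⟩

/-- The top (domain) component of a morphism of `Ext C`. -/
def ExtCat.homLeft {f g : ExtCat C} (φ : f ⟶ g) : f.obj.left ⟶ g.obj.left :=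
  CommaMorphism.left φ.hom

/-- The bottom (codomain) component of a morphism of `Ext C`. -/
def ExtCat.homRight {f g : ExtCat C} (φ : f ⟶ g) : f.obj.right ⟶ g.obj.right :=
  CommaMorphism.right φ.hom

lemma ExtCat.homLeft_comp {f g h : ExtCat C} (a : f ⟶ g) (b : g ⟶ h) :
    ExtCat.homLeft (a ≫ b) = ExtCat.homLeft a ≫ ExtCat.homLeft b := rfl

lemma ExtCat.homRight_comp {f g h : ExtCat C} (a : f ⟶ g) (b : g ⟶ h) :
    ExtCat.homRight (a ≫ b) = ExtCat.homRight a ≫ ExtCat.homRight b := rfl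

lemma ExtCat.hom_w {f g : ExtCat C} (φ : f ⟶ g) :
    ExtCat.homLeft φ ≫ g.obj.hom = f.obj.hom ≫ ExtCat.homRight φ :=
  CommaMorphism.w φ.hom

/-- A morphism of `Ext C` from a commutative square in `C`. -/
def ExtCat.homMk' {X₁ X₀ Y₁ Y₀ : C} {f : X₁ ⟶ X₀} {g : Y₁ ⟶ Y₀}
    {hf : IsRegEpi f} {hg : IsRegEpi g}
    (u : X₁ ⟶ Y₁) (v : X₀ ⟶ Y₀) (w : u ≫ g = f ≫ v) :
    ExtCat.mk' f hf ⟶ ExtCat.mk' g hg :=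
  ObjectProperty.homMk (Arrow.homMk (u := u) (v := v) w)

/-- A (commutative) square in `C`, with left vertical `left : A₁ ⟶ A₀`, right vertical
`right : B₁ ⟶ B₀`, top horizontal `top : A₁ ⟶ B₁` and bottom horizontal `bot : A₀ ⟶ B₀`. -/
structure Sq (C : Type u) [Category.{v} C] where
  A₁ : C
  A₀ : C
  B₁ : C
  B₀ : C
  left : A₁ ⟶ A₀
  right : B₁ ⟶ B₀
  top : A₁ ⟶ B₁
  bot : A₀ ⟶ B₀
  w : top ≫ right = left ≫ bot

/-- The square is a double extension. -/
def Sq.IsDE [HasFiniteLimits C] (s : Sq C) : Prop :=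
  IsDoubleExt s.left s.right s.top s.bot

/-- A commutative cube, presented as a morphism of squares `Φ : s ⟶ t`. -/
structure SqHom (s t : Sq C) where
  h₁₁ : s.A₁ ⟶ t.A₁
  h₁₀ : s.A₀ ⟶ t.A₀
  h₀₁ : s.B₁ ⟶ t.B₁
  h₀₀ : s.B₀ ⟶ t.B₀
  wA : h₁₁ ≫ t.left = s.left ≫ h₁₀
  wB : h₀₁ ≫ t.right = s.right ≫ h₀₀
  wt : h₁₁ ≫ t.top = s.top ≫ h₀₁
  wb : h₁₀ ≫ t.bot = s.bot ≫ h₀₀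

/-- Composition of cubes (as morphisms of squares). -/
def SqHom.comp {s t u : Sq C} (Φ : SqHom s t) (Ψ : SqHom t u) : SqHom s u where
  h₁₁ := Φ.h₁₁ ≫ Ψ.h₁₁
  h₁₀ := Φ.h₁₀ ≫ Ψ.h₁₀
  h₀₁ := Φ.h₀₁ ≫ Ψ.h₀₁
  h₀₀ := Φ.h₀₀ ≫ Ψ.h₀₀
  wA := by rw [Category.assoc, Ψ.wA, ← Category.assoc, Φ.wA, Category.assoc]
  wB := by rw [Category.assoc, Ψ.wB, ← Category.assoc, Φ.wB, Category.assoc]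
  wt := by rw [Category.assoc, Ψ.wt, ← Category.assoc, Φ.wt, Category.assoc]
  wb := by rw [Category.assoc, Ψ.wb, ← Category.assoc, Φ.wb, Category.assoc]

section Cube
variable [HasFiniteLimits C]

/-- Seen as a morphism `(σ, β) : s ⟶ t` between the double extensions `s` (as the arrow
`s.left → s.right`) and `t`, the face `σ` of the cube: the square from `s.left` to `t.left`. -/
def SqHom.sigmaSq {s t : Sq C} (Φ : SqHom s t) : Sq C where
  A₁ := s.A₁
  A₀ := s.A₀
  B₁ := t.A₁
  B₀ := t.A₀
  left := s.left
  right := t.left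
  top := Φ.h₁₁
  bot := Φ.h₁₀
  w := Φ.wA

/-- The face `β` of the cube: the square from `s.right` to `t.right`. -/
def SqHom.betaSq {s t : Sq C} (Φ : SqHom s t) : Sq C where
  A₁ := s.B₁
  A₀ := s.B₀
  B₁ := t.B₁
  B₀ := t.B₀
  left := s.right
  right := t.right
  top := Φ.h₀₁
  bot := Φ.h₀₀
  w := Φ.wB

/-- Top component of the componentwise pullback of `t` (i.e. `α`) and `betaSq Φ` (i.e. `β`). -/
noncomputable def SqHom.P₁ {s t : Sq C} (Φ : SqHom s t) : C := pullback t.top Φ.h₀₁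

/-- Bottom component of the componentwise pullback of `α` and `β`. -/
noncomputable def SqHom.P₀ {s t : Sq C} (Φ : SqHom s t) : C := pullback t.bot Φ.h₀₀

/-- The induced arrow between the components of the componentwise pullback of `α` and `β`. -/
noncomputable def SqHom.fP {s t : Sq C} (Φ : SqHom s t) : Φ.P₁ ⟶ Φ.P₀ :=
  pullback.map t.top Φ.h₀₁ t.bot Φ.h₀₀ t.left s.right t.right t.w Φ.wB

/-- The top comparison morphism. -/
noncomputable def SqHom.c₁ {s t : Sq C} (Φ : SqHom s t) : s.A₁ ⟶ Φ.P₁ :=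
  pullback.lift Φ.h₁₁ s.top Φ.wt

/-- The bottom comparison morphism. -/
noncomputable def SqHom.c₀ {s t : Sq C} (Φ : SqHom s t) : s.A₀ ⟶ Φ.P₀ :=
  pullback.lift Φ.h₁₀ s.bot Φ.wb

lemma SqHom.comp_w {s t : Sq C} (Φ : SqHom s t) : Φ.c₁ ≫ Φ.fP = s.left ≫ Φ.c₀ := by
  apply pullback.hom_ext
  · simp only [SqHom.c₁, SqHom.c₀, SqHom.fP, SqHom.P₁, SqHom.P₀, Category.assoc,
      pullback.lift_fst, pullback.lift_fst_assoc, pullback.lift_snd, pullback.lift_snd_assoc]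
    exact Φ.wA
  · simp only [SqHom.c₁, SqHom.c₀, SqHom.fP, SqHom.P₁, SqHom.P₀, Category.assoc,
      pullback.lift_fst, pullback.lift_fst_assoc, pullback.lift_snd, pullback.lift_snd_assoc]
    exact s.w

/-- The comparison square of the cube `Φ`, from `s.left` to the componentwise pullback
of `α` and `β`. -/
noncomputable def SqHom.compSq {s t : Sq C} (Φ : SqHom s t) : Sq C where
  A₁ := s.A₁
  A₀ := s.A₀
  B₁ := Φ.P₁
  B₀ := Φ.P₀
  left := s.left
  right := Φ.fP
  top := Φ.c₁
  bot := Φ.c₀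
  w := Φ.comp_w

/-- A `3`-cubical extension: the two opposite faces `γ = s` and `α = t`, the two connecting
faces `σ` and `β`, and the comparison square to the componentwise pullback of `α` and `β`
are all double extensions. -/
def SqHom.Is3CubExt {s t : Sq C} (Φ : SqHom s t) : Prop :=
  s.IsDE ∧ t.IsDE ∧ Φ.sigmaSq.IsDE ∧ Φ.betaSq.IsDE ∧ Φ.compSq.IsDE

end Cube

/-- The cube `Φ : s ⟶ t` is a limit cube: the cone from the initial vertex `s.A₁` on the
diagram formed by the remaining seven vertices is a limit cone. -/
def SqHom.IsLimitCube {s t : Sq C} (Φ : SqHom s t) : Prop :=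
  ∀ (W : C) (wA₀ : W ⟶ s.A₀) (wB₁ : W ⟶ s.B₁) (wtA₁ : W ⟶ t.A₁),
    wA₀ ≫ s.bot = wB₁ ≫ s.right →
    wA₀ ≫ Φ.h₁₀ = wtA₁ ≫ t.left →
    wB₁ ≫ Φ.h₀₁ = wtA₁ ≫ t.top →
    ∃! u : W ⟶ s.A₁, u ≫ s.left = wA₀ ∧ u ≫ s.top = wB₁ ∧ u ≫ Φ.h₁₁ = wtA₁

/-- A discrete fibration (of order 3): a `3`-cubical extension which is a limit cube. -/
def SqHom.IsDiscFib [HasFiniteLimits C] {s t : Sq C} (Φ : SqHom s t) : Prop :=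
  Φ.Is3CubExt ∧ Φ.IsLimitCube
section Galois
variable [HasFiniteLimits C]

/-- A strongly E-Birkhoff Galois structure on `C`: a full replete reflective subcategory
(given by the predicate `inB`, the reflector `F` and the unit `η`) such that every unit
component is a regular epimorphism and every naturality square of the unit at a regular
epimorphism is a double extension. -/
structure BirkhoffStructure (C : Type u) [Category.{v} C] [HasFiniteLimits C] where
  inB : C → Prop
  replete : ∀ {X Y : C}, inB X → (X ≅ Y) → inB Y
  F : C ⥤ C
  η : 𝟭 C ⟶ F
  obj_inB : ∀ A : C, inB (F.obj A)
  unit_regEpi : ∀ A : C, IsRegEpi (η.app A)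
  univ : ∀ {A X : C}, inB X → ∀ g : A ⟶ X, ∃! h : F.obj A ⟶ X, η.app A ≫ h = g
  stronglyBirkhoff : ∀ {A B : C} (f : A ⟶ B), IsRegEpi f →
    IsDoubleExt f (F.map f) (η.app A) (η.app B)

/-- A trivial covering: a regular epimorphism whose unit naturality square is a pullback. -/
def TrivialCovering (G : BirkhoffStructure C) {T E : C} (t : T ⟶ E) : Prop :=
  IsRegEpi t ∧ IsPullback (G.η.app T) t (G.F.map t) (G.η.app E)

/-- A covering: a regular epimorphism whose pullback along some regular epimorphism is a
trivial covering. -/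
def Covering (G : BirkhoffStructure C) {A B : C} (c : A ⟶ B) : Prop :=
  IsRegEpi c ∧ ∃ (E : C) (e : E ⟶ B), IsRegEpi e ∧ TrivialCovering G (pullback.snd c e)

end Galois

/-- The underlying square in `C` of a morphism of `Ext C`. -/
def sqOfHom {f g : ExtCat C} (φ : f ⟶ g) : Sq C where
  A₁ := f.obj.left
  A₀ := f.obj.right
  B₁ := g.obj.left
  B₀ := g.obj.right
  left := f.obj.hom
  right := g.obj.hom
  top := ExtCat.homLeft φ
  bot := ExtCat.homRight φ
  w := ExtCat.hom_w φ

/-- The underlying cube in `C` of a naturality square in `Ext C` of a natural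
transformation `η₁ : 𝟭 (Ext C) ⟶ F₁` at a morphism `φ : f ⟶ g` of `Ext C`. -/
def natCube (F₁ : ExtCat C ⥤ ExtCat C) (η₁ : 𝟭 (ExtCat C) ⟶ F₁) {f g : ExtCat C}
    (φ : f ⟶ g) : SqHom (sqOfHom φ) (sqOfHom (F₁.map φ)) where
  h₁₁ := ExtCat.homLeft (η₁.app f)
  h₁₀ := ExtCat.homRight (η₁.app f)
  h₀₁ := ExtCat.homLeft (η₁.app g)
  h₀₀ := ExtCat.homRight (η₁.app g)
  wA := ExtCat.hom_w (η₁.app f)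
  wB := ExtCat.hom_w (η₁.app g)
  wt := by
    have h := congrArg ExtCat.homLeft (η₁.naturality φ)
    rw [ExtCat.homLeft_comp, ExtCat.homLeft_comp] at h
    exact h.symm
  wb := by
    have h := congrArg ExtCat.homRight (η₁.naturality φ)
    rw [ExtCat.homRight_comp, ExtCat.homRight_comp] at h
    exact h.symm

section LevelOne
variable [HasFiniteLimits C]

/-- The level-one Galois structure induced by a strongly E-Birkhoff Galois structure `G`:
the coverings form a reflective subcategory of `Ext C`, with reflector `F₁` and unit `η₁`,
every unit component is a double extension, and the reflection is strongly E₂-Birkhoff. -/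
structure LevelOne (G : BirkhoffStructure C) where
  F₁ : ExtCat C ⥤ ExtCat C
  η₁ : 𝟭 (ExtCat C) ⟶ F₁
  obj_cov : ∀ f : ExtCat C, Covering G (F₁.obj f).obj.hom
  univ : ∀ {f x : ExtCat C}, Covering G x.obj.hom → ∀ g : f ⟶ x,
    ∃! h : F₁.obj f ⟶ x, η₁.app f ≫ h = g
  unit_DE : ∀ f : ExtCat C, (sqOfHom (η₁.app f)).IsDE
  stronglyBirkhoff : ∀ {f g : ExtCat C} (φ : f ⟶ g), (sqOfHom φ).IsDE →
    (natCube F₁ η₁ φ).Is3CubExt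

/-- A trivial double covering: a morphism of `Ext C` whose underlying square is a double
extension and whose `η₁`-naturality square is a pullback in `Ext C`. -/
def TrivDoubleCov {G : BirkhoffStructure C} (L : LevelOne G) {f g : ExtCat C}
    (φ : f ⟶ g) : Prop :=
  (sqOfHom φ).IsDE ∧ IsPullback (L.η₁.app f) φ (L.F₁.map φ) (L.η₁.app g)

/-- A double covering: a double extension `α : d ⟶ c` in `Ext C` such that the pullback of
`α` along some double extension `γ : e ⟶ c` is a trivial double covering. -/
def DoubleCov {G : BirkhoffStructure C} (L : LevelOne G) {d c : ExtCat C}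
    (α : d ⟶ c) : Prop :=
  (sqOfHom α).IsDE ∧ ∃ (e : ExtCat C) (γ : e ⟶ c), (sqOfHom γ).IsDE ∧
    ∃ (p : ExtCat C) (pγ : p ⟶ e) (pα : p ⟶ d),
      IsPullback pγ pα γ α ∧ TrivDoubleCov L pγ

end LevelOne

/-!
A regular epimorphism `x : X ⟶ Y` is a trivial covering exactly when `x` and the unit `η_X` are
jointly monic: the comparison map of its unit naturality square is a regular epimorphism by the
strong Birkhoff condition, and it is monic precisely under joint monicity. Pulling `t ≫ s` back
along the regular epimorphism `e` witnessing that it is a covering factors the resulting trivial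
covering as `u ≫ v`, a pullback `u` of `t` followed by the pullback `v` of `s` along `e`. Joint
monicity passes from `u ≫ v` to `u` at once, and to `v` after lifting generalised elements along
regular epimorphisms. So `u` and `v` are trivial coverings, witnessing that `t` (along the
pullback of `e` along `s`) and `s` (along `e`) are coverings.
-/

lemma IsRegEpi.epi {X Y : C} {f : X ⟶ Y} (hf : IsRegEpi f) : Epi f :=
  haveI : IsRegularEpi f := ⟨hf⟩
  inferInstance

section Regular

variable [HasFiniteLimits C] [RegularCat C]

lemma IsRegEpi.pullback_fst {X Y Z : C} (f : X ⟶ Z) {g : Y ⟶ Z} (hg : IsRegEpi g) :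
    IsRegEpi (pullback.fst f g) := by
  have : IsRegularEpi (pullback.snd g f) := ⟨RegularCat.regEpiPullbackStable g f hg⟩
  rw [← pullbackSymmetry_hom_comp_snd]
  exact (((MorphismProperty.regularEpi C).cancel_left_of_respectsIso _ _).2 this).regularEpi

lemma exists_isRegEpi_lift {Y W Z : C} {q : Y ⟶ W} (hq : IsRegEpi q) (g : Z ⟶ W) :
    ∃ (Z' : C) (π : Z' ⟶ Z) (l : Z' ⟶ Y), IsRegEpi π ∧ l ≫ q = π ≫ g :=
  ⟨_, pullback.snd q g, pullback.fst q g, RegularCat.regEpiPullbackStable q g hq,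
    pullback.condition⟩

end Regular

section Galois

variable [HasFiniteLimits C] (G : BirkhoffStructure C)

def JointlyMonicWithUnit {X Y : C} (x : X ⟶ Y) : Prop :=
  ∀ ⦃Z : C⦄ (a b : Z ⟶ X), a ≫ x = b ≫ x → a ≫ G.η.app X = b ≫ G.η.app X → a = b

variable {G}

lemma BirkhoffStructure.unit_naturality {X Y : C} (f : X ⟶ Y) :
    f ≫ G.η.app Y = G.η.app X ≫ G.F.map f :=
  G.η.naturality f

lemma TrivialCovering.jointlyMonicWithUnit {X Y : C} {x : X ⟶ Y} (hx : TrivialCovering G x) :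
    JointlyMonicWithUnit G x :=
  fun _ _ _ hx' hη => hx.2.hom_ext hη hx'

lemma trivialCovering_of_jointlyMonicWithUnit {X Y : C} {x : X ⟶ Y} (hx : IsRegEpi x)
    (hjm : JointlyMonicWithUnit G x) : TrivialCovering G x := by
  have hDE := G.stronglyBirkhoff x hx
  set k := pullback.lift x (G.η.app X) hDE.w.symm
  obtain ⟨hk⟩ := hDE.comparison
  have : Mono k := ⟨fun a b hab => hjm a b
    (by simpa only [Category.assoc, k, pullback.lift_fst] using hab =≫ pullback.fst _ _)
    (by simpa only [Category.assoc, k, pullback.lift_snd] using hab =≫ pullback.snd _ _)⟩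
  have : IsIso k := isIso_of_regularEpi_of_mono k hk
  exact ⟨hx, (IsPullback.of_iso_pullback ⟨hDE.w.symm⟩ (asIso k)
    (pullback.lift_fst _ _ _) (pullback.lift_snd _ _ _)).flip⟩

lemma JointlyMonicWithUnit.mono_comp {P X Y : C} (i : P ⟶ X) [Mono i] {w : X ⟶ Y}
    (hw : JointlyMonicWithUnit G w) : JointlyMonicWithUnit G (i ≫ w) := by
  intro Z a b hiw hη
  have hη' : (a ≫ i) ≫ G.η.app X = (b ≫ i) ≫ G.η.app X := by
    rw [Category.assoc, Category.assoc, G.unit_naturality i, reassoc_of% hη]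
  exact (cancel_mono i).1 (hw _ _ (by simpa only [Category.assoc] using hiw) hη')

lemma JointlyMonicWithUnit.of_comp_left {P Q E : C} {u : P ⟶ Q} {v : Q ⟶ E}
    (huv : JointlyMonicWithUnit G (u ≫ v)) : JointlyMonicWithUnit G u :=
  fun _ a b hu hη => huv a b (by simp only [reassoc_of% hu]) hη

/-- Locally lift `b` to `b'` along `u`; as `a` and `b` agree after `η_Q`, the pair `(a, η_P ∘ b')`
then locally lifts to some `a'` along the comparison map of the unit square at `u`, and `a'` agrees
with `b'` by joint monicity of `u ≫ v`. -/
lemma JointlyMonicWithUnit.of_comp_right [RegularCat C] {P Q E : C} {u : P ⟶ Q} {v : Q ⟶ E}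
    (hu : IsRegEpi u) (huv : JointlyMonicWithUnit G (u ≫ v)) : JointlyMonicWithUnit G v := by
  intro Z a b hv hη
  obtain ⟨Z₁, π₁, b', hπ₁, hb'⟩ := exists_isRegEpi_lift hu b
  have hDE := G.stronglyBirkhoff u hu
  have hw : (π₁ ≫ a) ≫ G.η.app Q = (b' ≫ G.η.app P) ≫ G.F.map u := by
    rw [Category.assoc, hη, Category.assoc, hDE.w, reassoc_of% hb']
  obtain ⟨Z₂, π₂, a', hπ₂, ha'⟩ := exists_isRegEpi_lift hDE.comparison (pullback.lift _ _ hw)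
  have ha'u : a' ≫ u = π₂ ≫ π₁ ≫ a := by
    simpa only [Category.assoc, pullback.lift_fst] using ha' =≫ pullback.fst _ _
  have ha'η : a' ≫ G.η.app P = π₂ ≫ b' ≫ G.η.app P := by
    simpa only [Category.assoc, pullback.lift_snd] using ha' =≫ pullback.snd _ _
  have ha'b' : a' = π₂ ≫ b' :=
    huv _ _ (by simp only [reassoc_of% ha'u, hv, reassoc_of% hb', Category.assoc])
      (by simpa only [Category.assoc] using ha'η)
  have := hπ₁.epi
  have := hπ₂.epi
  refine (cancel_epi π₁).1 ((cancel_epi π₂).1 ?_)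
  rw [← ha'u, ha'b', Category.assoc, hb']

end Galois

/-- if a composite of regular epimorphisms is a covering, then so are both
factors. -/
theorem statement_12 {C : Type u} [Category.{v} C] [HasFiniteLimits C] [BarrExact C]
    (G : BirkhoffStructure C)
    {A B X : C} (t : A ⟶ B) (s : B ⟶ X)
    (ht : IsRegEpi t) (hs : IsRegEpi s)
    (h : Covering G (t ≫ s)) :
    Covering G t ∧ Covering G s := by
  obtain ⟨-, E, e, he, htse⟩ := h
  have hu := RegularCat.regEpiPullbackStable t (pullback.fst s e) ht
  have hv := RegularCat.regEpiPullbackStable s e hs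
  have huv : JointlyMonicWithUnit G (pullback.snd t (pullback.fst s e) ≫ pullback.snd s e) := by
    rw [← pullbackRightPullbackFstIso_hom_snd s e t]
    exact htse.jointlyMonicWithUnit.mono_comp _
  exact ⟨⟨ht, _, pullback.fst s e, IsRegEpi.pullback_fst s he,
      trivialCovering_of_jointlyMonicWithUnit hu huv.of_comp_left⟩,
    ⟨hs, E, e, he, trivialCovering_of_jointlyMonicWithUnit hv (huv.of_comp_right hu)⟩⟩

end Paper
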